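/- arXiv:2403.05071 — 3 statements merged into one kernel-verified Lean document; each statement's English description precedes it below -/
import Mathlib

section
/- Let T ∈ B_{A^{1/2}}(H) satisfy w_A(T) = ‖T‖_A and TA^{1/2} = A^{1/2}T. Then the A-spectral radius r_A(T) equals ‖T‖_A. -/
open Filter Topology ContinuousLinearMap

variable {H : Type*} [NormedAddCommGroup H] [InnerProductSpace ℂ H] [CompleteSpace H]

/-- The `A`-seminorm `‖x‖_A = ⟨Ax,x⟩^{1/2}`. -/
noncomputable def anorm (A : H →L[ℂ] H) (x : H) : ℝ :=
  Real.sqrt (inner ℂ (A x) x : ℂ).re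

/-- `B_{A^{1/2}}(H)`: the `A`-bounded operators. -/
def MemBAhalf (A T : H →L[ℂ] H) : Prop :=
  ∃ d > 0, ∀ ξ : H, anorm A (T ξ) ≤ d * anorm A ξ

/-- `B_A(H)`: operators admitting an `A`-adjoint. -/
def MemBA (A T : H →L[ℂ] H) : Prop :=
  Set.range (fun x => ContinuousLinearMap.adjoint T (A x)) ⊆ Set.range A

/-- A-invertibility in `B_{A^{1/2}}(H)`. -/
def AInvertibleHalf (A T : H →L[ℂ] H) : Prop :=
  ∃ S : H →L[ℂ] H, S ≠ 0 ∧ MemBAhalf A S ∧ A ∘L T ∘L S = A ∧ A ∘L S ∘L T = A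

/-- A-invertibility in `B_A(H)`. -/
def AInvertibleBA (A T : H →L[ℂ] H) : Prop :=
  ∃ S : H →L[ℂ] H, S ≠ 0 ∧ MemBA A S ∧ A ∘L T ∘L S = A ∧ A ∘L S ∘L T = A

/-- The `A`-approximate point spectrum. -/
def sigmaAapp (A T : H →L[ℂ] H) : Set ℂ :=
  {lam | ∃ x : ℕ → H, (∀ n, anorm A (x n) = 1) ∧
    Tendsto (fun n => anorm A (T (x n) - lam • x n)) atTop (nhds 0)}

/-- The `A`-spectrum. -/
def sigmaA (A T : H →L[ℂ] H) : Set ℂ :=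
  {lam | ¬ AInvertibleHalf A (lam • (1 : H →L[ℂ] H) - T)}

/-- The `A`-numerical range. -/
def WA (A T : H →L[ℂ] H) : Set ℂ :=
  {z | ∃ x : H, anorm A x = 1 ∧ z = (inner ℂ (A (T x)) x : ℂ)}

/-- The `A`-operator seminorm, sup over the closure of the range of `A`. -/
noncomputable def AopnormCl (A T : H →L[ℂ] H) : ℝ :=
  sSup {r | ∃ ξ ∈ closure (Set.range A), anorm A ξ ≤ 1 ∧ r = anorm A (T ξ)}

/-- The `A`-operator seminorm, sup over all vectors of `A`-seminorm at most one. -/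
noncomputable def Aopnorm (A T : H →L[ℂ] H) : ℝ :=
  sSup {r | ∃ ξ : H, anorm A ξ ≤ 1 ∧ r = anorm A (T ξ)}

/-- The `A`-numerical radius. -/
noncomputable def wA (A T : H →L[ℂ] H) : ℝ :=
  sSup {r | ∃ x : H, anorm A x = 1 ∧ r = ‖(inner ℂ (A (T x)) x : ℂ)‖}

/-- The `A`-reduced minimum modulus. -/
noncomputable def gammaA (A T : H →L[ℂ] H) : ℝ :=
  sInf {r | ∃ ξ : H, (∀ y : H, anorm A (T y) = 0 → (inner ℂ (A ξ) y : ℂ) = 0) ∧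
    anorm A ξ = 1 ∧ r = anorm A (T ξ)}

/-- closure of the range of `A` as a submodule. -/
noncomputable def rangeClosure (A : H →L[ℂ] H) : Submodule ℂ H :=
  (LinearMap.range (A : H →ₗ[ℂ] H)).topologicalClosure

noncomputable instance (A : H →L[ℂ] H) : CompleteSpace (rangeClosure A) :=
  (Submodule.isClosed_topologicalClosure _).completeSpace_coe

/-- orthogonal projection onto the closure of the range of `A`, as an operator on `H`. -/
noncomputable def Pcl (A : H →L[ℂ] H) : H →L[ℂ] H :=
  (rangeClosure A).subtypeL ∘L (rangeClosure A).orthogonalProjection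



section Stmt4Aux

variable {H : Type*} [NormedAddCommGroup H] [InnerProductSpace ℂ H] [CompleteSpace H]

lemma stmt4_inner_eq (A sqrtA : H →L[ℂ] H) (hsqpos : sqrtA.IsPositive)
    (hsq : sqrtA ∘L sqrtA = A) (x y : H) :
    (inner ℂ (A x) y : ℂ) = inner ℂ (sqrtA x) (sqrtA y) := by
  conv_lhs => rw [← hsq]
  simp only [ContinuousLinearMap.comp_apply]
  rw [← ContinuousLinearMap.adjoint_inner_left, hsqpos.isSelfAdjoint.adjoint_eq]

lemma stmt4_anorm_eq (A sqrtA : H →L[ℂ] H) (hsqpos : sqrtA.IsPositive)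
    (hsq : sqrtA ∘L sqrtA = A) (x : H) : anorm A x = ‖sqrtA x‖ := by
  rw [anorm, stmt4_inner_eq A sqrtA hsqpos hsq x x]
  rw [show (inner ℂ (sqrtA x) (sqrtA x) : ℂ).re
      = RCLike.re (inner ℂ (sqrtA x) (sqrtA x) : ℂ) from rfl]
  rw [inner_self_eq_norm_sq]
  exact Real.sqrt_sq (norm_nonneg _)

end Stmt4Aux

/-- if `T ∈ B_{A^{1/2}}(H)`, `w_A(T) = ‖T‖_A` and `T A^{1/2} = A^{1/2} T`,
then `r_A(T) = lim ‖T^n‖_A^{1/n} = ‖T‖_A`. -/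
theorem stmt4 (A T sqrtA : H →L[ℂ] H) (hA : A.IsPositive) (hA0 : A ≠ 0)
    (hsqpos : sqrtA.IsPositive) (hsq : sqrtA ∘L sqrtA = A)
    (hT : MemBAhalf A T)
    (hw : wA A T = Aopnorm A T)
    (hcomm : T ∘L sqrtA = sqrtA ∘L T) :
    Tendsto (fun n : ℕ => (Aopnorm A (T ^ n)) ^ ((n : ℝ)⁻¹)) atTop
      (nhds (Aopnorm A T)) := by
  obtain ⟨d, hd0, hdb⟩ := hT
  have key : ∀ x : H, anorm A x = ‖sqrtA x‖ :=
    stmt4_anorm_eq A sqrtA hsqpos hsq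
  have keyi : ∀ x y : H, (inner ℂ (A x) y : ℂ) = inner ℂ (sqrtA x) (sqrtA y) :=
    stmt4_inner_eq A sqrtA hsqpos hsq
  have hnn : ∀ x : H, 0 ≤ anorm A x := fun x => by rw [key]; positivity
  have hsmul : ∀ (c : ℂ) (x : H), anorm A (c • x) = ‖c‖ * anorm A x := by
    intro c x; rw [key, key, map_smul, norm_smul]
  have htri : ∀ x y : H, anorm A (x + y) ≤ anorm A x + anorm A y := by
    intro x y; rw [key, key, key, map_add]; exact norm_add_le _ _
  set N := Aopnorm A T with hNdef
  set M : ℕ → ℝ := fun n => Aopnorm A (T ^ n) with hMdef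
  -- 0 belongs to each defining set
  have hzero : ∀ S : H →L[ℂ] H,
      (0 : ℝ) ∈ {r | ∃ ξ : H, anorm A ξ ≤ 1 ∧ r = anorm A (S ξ)} := by
    intro S
    refine ⟨0, by rw [key]; simp, ?_⟩
    rw [key]; simp
  have hbddT : BddAbove {r | ∃ ξ : H, anorm A ξ ≤ 1 ∧ r = anorm A (T ξ)} := by
    refine ⟨d, ?_⟩
    rintro r ⟨ξ, hξ, rfl⟩
    calc anorm A (T ξ) ≤ d * anorm A ξ := hdb ξ
      _ ≤ d * 1 := mul_le_mul_of_nonneg_left hξ hd0.le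
      _ = d := mul_one d
  have hN0 : 0 ≤ N := le_csSup hbddT (hzero T)
  -- T is N-bounded for the A-seminorm
  have hTle : ∀ x : H, anorm A (T x) ≤ N * anorm A x := by
    intro x
    rcases eq_or_lt_of_le (hnn x) with h0 | hpos
    · have h1 : anorm A (T x) ≤ d * anorm A x := hdb x
      rw [← h0] at h1 ⊢
      simpa using h1
    · set t := anorm A x with ht
      have htC : ‖((t : ℂ))⁻¹‖ = t⁻¹ := by
        rw [norm_inv, Complex.norm_real, Real.norm_of_nonneg hpos.le]
      have hu : anorm A (((t : ℂ))⁻¹ • x) = 1 := by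
        rw [hsmul, htC, ← ht, inv_mul_cancel₀ (ne_of_gt hpos)]
      have hmem : anorm A (T (((t : ℂ))⁻¹ • x)) ≤ N :=
        le_csSup hbddT ⟨_, le_of_eq hu, rfl⟩
      rw [map_smul, hsmul, htC] at hmem
      have := mul_le_mul_of_nonneg_left hmem hpos.le
      rw [← mul_assoc, mul_inv_cancel₀ (ne_of_gt hpos), one_mul] at this
      calc anorm A (T x) ≤ t * N := this
        _ = N * anorm A x := by rw [← ht]; ring
  have hTnle : ∀ (n : ℕ) (x : H), anorm A ((T ^ n) x) ≤ N ^ n * anorm A x := by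
    intro n
    induction n with
    | zero => intro x; simp [ContinuousLinearMap.one_apply]
    | succ n ih =>
      intro x
      rw [pow_succ, ContinuousLinearMap.mul_apply]
      calc anorm A ((T ^ n) (T x)) ≤ N ^ n * anorm A (T x) := ih (T x)
        _ ≤ N ^ n * (N * anorm A x) :=
          mul_le_mul_of_nonneg_left (hTle x) (pow_nonneg hN0 n)
        _ = N ^ (n + 1) * anorm A x := by ring
  have hbddTn : ∀ n : ℕ,
      BddAbove {r | ∃ ξ : H, anorm A ξ ≤ 1 ∧ r = anorm A ((T ^ n) ξ)} := by
    intro n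
    refine ⟨N ^ n, ?_⟩
    rintro r ⟨ξ, hξ, rfl⟩
    calc anorm A ((T ^ n) ξ) ≤ N ^ n * anorm A ξ := hTnle n ξ
      _ ≤ N ^ n * 1 := mul_le_mul_of_nonneg_left hξ (pow_nonneg hN0 n)
      _ = N ^ n := mul_one _
  have hMnn : ∀ n : ℕ, 0 ≤ M n := fun n => le_csSup (hbddTn n) (hzero (T ^ n))
  have hupper : ∀ n : ℕ, M n ≤ N ^ n := by
    intro n
    refine Real.sSup_le ?_ (pow_nonneg hN0 n)
    rintro r ⟨ξ, hξ, rfl⟩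
    calc anorm A ((T ^ n) ξ) ≤ N ^ n * anorm A ξ := hTnle n ξ
      _ ≤ N ^ n * 1 := mul_le_mul_of_nonneg_left hξ (pow_nonneg hN0 n)
      _ = N ^ n := mul_one _
  have hlow1 : ∀ (n : ℕ) (x : H), anorm A x = 1 → anorm A ((T ^ n) x) ≤ M n :=
    fun n x hx => le_csSup (hbddTn n) ⟨x, hx.le, rfl⟩
  -- a unit vector exists
  have hex : ∃ u : H, anorm A u = 1 := by
    have hsA : sqrtA ≠ 0 := by
      intro h; apply hA0; rw [← hsq, h]; ext x; simp
    obtain ⟨x₀, hx₀⟩ : ∃ x₀ : H, sqrtA x₀ ≠ 0 := by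
      by_contra h
      push_neg at h
      exact hsA (ContinuousLinearMap.ext fun x => by rw [h x]; rfl)
    have ht : (0 : ℝ) < ‖sqrtA x₀‖ := norm_pos_iff.mpr hx₀
    refine ⟨((‖sqrtA x₀‖ : ℂ))⁻¹ • x₀, ?_⟩
    rw [hsmul, key, norm_inv, Complex.norm_real, Real.norm_of_nonneg ht.le,
      inv_mul_cancel₀ (ne_of_gt ht)]
  -- the numerical-range set
  set W : Set ℝ :=
    {r | ∃ x : H, anorm A x = 1 ∧ r = ‖(inner ℂ (A (T x)) x : ℂ)‖} with hWdef
  have hWne : W.Nonempty := by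
    obtain ⟨u, hu⟩ := hex
    exact ⟨_, u, hu, rfl⟩
  have hsupW : sSup W = N := hw
  -- the Cauchy-Schwarz bound on W and the key per-vector estimate
  have habs_le : ∀ x : H, anorm A x = 1 →
      ‖(inner ℂ (A (T x)) x : ℂ)‖ ≤ N := by
    intro x hx
    have h1 : ‖(inner ℂ (A (T x)) x : ℂ)‖
        = ‖(inner ℂ (sqrtA (T x)) (sqrtA x) : ℂ)‖ := by
      rw [keyi]
    calc ‖(inner ℂ (A (T x)) x : ℂ)‖
        = ‖(inner ℂ (sqrtA (T x)) (sqrtA x) : ℂ)‖ := h1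
      _ ≤ ‖sqrtA (T x)‖ * ‖sqrtA x‖ := norm_inner_le_norm _ _
      _ = anorm A (T x) * anorm A x := by rw [key, key]
      _ ≤ (N * anorm A x) * anorm A x :=
        mul_le_mul_of_nonneg_right (hTle x) (hnn x)
      _ = N := by rw [hx]; ring
  -- main estimate for a unit vector
  have hmain : ∀ (n : ℕ) (x : H), anorm A x = 1 →
      ‖(inner ℂ (A (T x)) x : ℂ)‖ ^ n
        - (n * (N + 1) ^ n) *
          Real.sqrt (N ^ 2 - ‖(inner ℂ (A (T x)) x : ℂ)‖ ^ 2) ≤ M n := by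
    intro n x hx
    set μ : ℂ := inner ℂ (A (T x)) x with hμdef
    set lam : ℂ := starRingEnd ℂ μ with hlamdef
    have hlamnorm : ‖lam‖ = ‖μ‖ := by rw [hlamdef, RingHomIsometric.norm_map]
    have habs : ‖μ‖ = ‖μ‖ := rfl
    have hμN : ‖μ‖ ≤ N := by rw [← habs]; exact habs_le x hx
    set e : ℝ := anorm A (T x - lam • x) with hedef
    have he0 : 0 ≤ e := hnn _
    -- e ^ 2 ≤ N ^ 2 - ‖μ‖ ^ 2
    have he2 : e ^ 2 ≤ N ^ 2 - ‖μ‖ ^ 2 := by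
      have hv1 : ‖sqrtA x‖ = 1 := by rw [← key, hx]
      have hinner : (inner ℂ (sqrtA (T x)) (sqrtA x) : ℂ) = μ := by
        rw [← keyi, hμdef]
      have hEe : e = ‖sqrtA (T x) - lam • sqrtA x‖ := by
        rw [hedef, key, map_sub, map_smul]
      have hexp : ‖sqrtA (T x) - lam • sqrtA x‖ ^ 2
          = ‖sqrtA (T x)‖ ^ 2 - 2 * RCLike.re (inner ℂ (sqrtA (T x)) (lam • sqrtA x) : ℂ)
            + ‖lam • sqrtA x‖ ^ 2 := norm_sub_sq _ _
      have hre : RCLike.re (inner ℂ (sqrtA (T x)) (lam • sqrtA x) : ℂ) = ‖μ‖ ^ 2 := by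
        rw [inner_smul_right, hinner, hlamdef, RCLike.conj_mul]
        norm_cast
      have hsm : ‖lam • sqrtA x‖ ^ 2 = ‖μ‖ ^ 2 := by
        rw [norm_smul, hv1, mul_one, hlamnorm]
      have hTxN : ‖sqrtA (T x)‖ ≤ N := by
        rw [← key]
        calc anorm A (T x) ≤ N * anorm A x := hTle x
          _ = N := by rw [hx, mul_one]
      have h1 : e ^ 2 = ‖sqrtA (T x)‖ ^ 2 - ‖μ‖ ^ 2 := by
        rw [hEe, hexp, hre, hsm]; ring
      rw [h1]
      have := pow_le_pow_left₀ (norm_nonneg (sqrtA (T x))) hTxN 2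
      linarith
    -- telescoping
    have htele : ∀ m : ℕ, anorm A ((T ^ m) x - (lam ^ m) • x) ≤ (m * (N + 1) ^ m) * e := by
      intro m
      induction m with
      | zero =>
        simp only [pow_zero, ContinuousLinearMap.one_apply, one_smul, sub_self]
        rw [key]
        simp
      | succ m ih =>
        have hsplit : (T ^ (m + 1)) x - (lam ^ (m + 1)) • x
            = T ((T ^ m) x - (lam ^ m) • x) + (lam ^ m) • (T x - lam • x) := by
          rw [pow_succ' T m, ContinuousLinearMap.mul_apply, pow_succ]
          rw [map_sub, map_smul, smul_sub, smul_smul]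
          abel
        rw [hsplit]
        have h1 : anorm A (T ((T ^ m) x - (lam ^ m) • x))
            ≤ N * ((m * (N + 1) ^ m) * e) := by
          calc anorm A (T ((T ^ m) x - (lam ^ m) • x))
              ≤ N * anorm A ((T ^ m) x - (lam ^ m) • x) := hTle _
            _ ≤ N * ((m * (N + 1) ^ m) * e) := mul_le_mul_of_nonneg_left ih hN0
        have h2 : anorm A ((lam ^ m) • (T x - lam • x)) ≤ (N + 1) ^ m * e := by
          rw [hsmul]
          have : ‖lam ^ m‖ ≤ (N + 1) ^ m := by
            rw [norm_pow, hlamnorm]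
            exact pow_le_pow_left₀ (norm_nonneg μ) (by linarith) m
          exact mul_le_mul_of_nonneg_right (by rw [← hedef] at *; exact this) he0
        calc anorm A (T ((T ^ m) x - (lam ^ m) • x) + (lam ^ m) • (T x - lam • x))
            ≤ anorm A (T ((T ^ m) x - (lam ^ m) • x))
              + anorm A ((lam ^ m) • (T x - lam • x)) := htri _ _
          _ ≤ N * ((m * (N + 1) ^ m) * e) + (N + 1) ^ m * e := add_le_add h1 h2
          _ ≤ (((m : ℝ) + 1) * (N + 1) ^ (m + 1)) * e := by
            have hNp1 : (1 : ℝ) ≤ N + 1 := by linarith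
            have hp : (0 : ℝ) ≤ (N + 1) ^ m := by positivity
            have hk1 : N * (m * (N + 1) ^ m) ≤ (m : ℝ) * (N + 1) ^ (m + 1) := by
              rw [pow_succ]
              have hm : (0 : ℝ) ≤ (m : ℝ) := Nat.cast_nonneg m
              nlinarith
            have hk2 : (N + 1) ^ m ≤ (N + 1) ^ (m + 1) :=
              pow_le_pow_right₀ hNp1 (Nat.le_succ m)
            nlinarith
          _ = (((m : ℕ) + 1 : ℕ) * (N + 1) ^ (m + 1)) * e := by push_cast; ring
    -- reverse triangle
    have hrev : ‖μ‖ ^ n - anorm A ((T ^ n) x - (lam ^ n) • x) ≤ anorm A ((T ^ n) x) := by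
      have h1 : anorm A ((lam ^ n) • x) = ‖μ‖ ^ n := by
        rw [hsmul, hx, mul_one, norm_pow, hlamnorm]
      have h2 : anorm A ((lam ^ n) • x) - anorm A ((T ^ n) x)
          ≤ anorm A ((T ^ n) x - (lam ^ n) • x) := by
        rw [key, key, key]
        calc ‖sqrtA ((lam ^ n) • x)‖ - ‖sqrtA ((T ^ n) x)‖
            ≤ ‖sqrtA ((lam ^ n) • x) - sqrtA ((T ^ n) x)‖ := norm_sub_norm_le _ _
          _ = ‖sqrtA ((T ^ n) x) - sqrtA ((lam ^ n) • x)‖ := norm_sub_rev _ _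
          _ = ‖sqrtA ((T ^ n) x - (lam ^ n) • x)‖ := by rw [map_sub]
      rw [h1] at h2; linarith
    -- e ≤ sqrt(N² - ‖μ‖²)
    have hesqrt : e ≤ Real.sqrt (N ^ 2 - ‖μ‖ ^ 2) := Real.le_sqrt_of_sq_le he2
    have hfinal : ‖μ‖ ^ n - (n * (N + 1) ^ n) * Real.sqrt (N ^ 2 - ‖μ‖ ^ 2)
        ≤ anorm A ((T ^ n) x) := by
      have hc : (0 : ℝ) ≤ (n : ℝ) * (N + 1) ^ n := by positivity
      have := mul_le_mul_of_nonneg_left hesqrt hc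
      have h3 := htele n
      linarith
    rw [habs]
    calc ‖μ‖ ^ n - (n * (N + 1) ^ n) * Real.sqrt (N ^ 2 - ‖μ‖ ^ 2)
        ≤ anorm A ((T ^ n) x) := hfinal
      _ ≤ M n := hlow1 n x hx
  -- equality M n = N ^ n for n ≥ 1
  have heq : ∀ n : ℕ, 1 ≤ n → M n = N ^ n := by
    intro n hn
    rcases eq_or_lt_of_le hN0 with hNz | hNpos
    · have h1 : M n ≤ N ^ n := hupper n
      have h2 : 0 ≤ M n := hMnn n
      have : N ^ n = 0 := by rw [← hNz, zero_pow (by omega)]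
      linarith
    · refine le_antisymm (hupper n) ?_
      -- lower bound via the ε-argument
      set g : ℝ → ℝ := fun ε =>
        (N - ε) ^ n - (n * (N + 1) ^ n) * Real.sqrt (N ^ 2 - (N - ε) ^ 2) with hgdef
      have hgcont : Continuous g := by
        apply Continuous.sub
        · exact (continuous_const.sub continuous_id).pow n
        · exact continuous_const.mul (Real.continuous_sqrt.comp
            (continuous_const.sub ((continuous_const.sub continuous_id).pow 2)))
      have hg0 : g 0 = N ^ n := by
        rw [hgdef]
        simp only [sub_zero, sub_self, Real.sqrt_zero, mul_zero]
      have htend : Tendsto g (nhdsWithin 0 (Set.Ioi 0)) (nhds (N ^ n)) := by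
        have := hgcont.tendsto 0
        rw [hg0] at this
        exact this.mono_left nhdsWithin_le_nhds
      refine le_of_tendsto htend ?_
      have hIoo : Set.Ioo (0 : ℝ) N ∈ nhdsWithin (0 : ℝ) (Set.Ioi 0) := by
        apply Ioo_mem_nhdsGT_of_mem
        exact ⟨le_refl 0, hNpos⟩
      filter_upwards [hIoo] with ε hε
      obtain ⟨hε0, hεN⟩ := hε
      -- pick a near-maximizing vector
      obtain ⟨r, hrW, hrgt⟩ :=
        exists_lt_of_lt_csSup hWne (show N - ε < sSup W by rw [hsupW]; linarith)
      obtain ⟨x, hx, rfl⟩ := hrW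
      set c : ℝ := ‖(inner ℂ (A (T x)) x : ℂ)‖ with hcdef
      have hcN : c ≤ N := habs_le x hx
      have hcpos : 0 ≤ N - ε := by linarith
      have h1 : (N - ε) ^ n ≤ c ^ n := pow_le_pow_left₀ hcpos hrgt.le n
      have h2 : Real.sqrt (N ^ 2 - c ^ 2) ≤ Real.sqrt (N ^ 2 - (N - ε) ^ 2) := by
        apply Real.sqrt_le_sqrt
        have := pow_le_pow_left₀ hcpos hrgt.le 2
        linarith
      have h3 := hmain n x hx
      have hc4 : (0 : ℝ) ≤ (n : ℝ) * (N + 1) ^ n := by positivity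
      have h5 := mul_le_mul_of_nonneg_left h2 hc4
      rw [hgdef]
      simp only
      rw [← hcdef] at h3
      linarith
  -- conclude
  have hconst : ∀ n : ℕ, 1 ≤ n → (M n) ^ ((n : ℝ)⁻¹) = N := by
    intro n hn
    rw [heq n hn, ← Real.rpow_natCast N n, ← Real.rpow_mul hN0]
    rw [mul_inv_cancel₀ (by exact_mod_cast Nat.one_le_iff_ne_zero.mp hn), Real.rpow_one]
  have : (fun n : ℕ => (M n) ^ ((n : ℝ)⁻¹)) =ᶠ[atTop] fun _ => N := by
    rw [Filter.eventuallyEq_iff_exists_mem]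
    exact ⟨{n | 1 ≤ n}, Filter.mem_atTop 1, fun n hn => hconst n hn⟩
  exact Filter.Tendsto.congr' this.symm tendsto_const_nhds
end

section
/- Let T ∈ B_{A^{1/2}}(H) be A-invertible in B_{A^{1/2}}(H) with A-inverse S. Then σ_{A,app}(S) = {λ ∈ ℂ : 1/λ ∈ σ_{A,app}(T)}. -/
open Filter Topology ContinuousLinearMap

variable {H : Type*} [NormedAddCommGroup H] [InnerProductSpace ℂ H] [CompleteSpace H]

/- Write `R = A^{1/2}`, so that `‖x‖_A = ‖R x‖`. Since `R` and `A` have the same kernel,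
`A T S = A` gives `R T S = R`. Hence `1 = ‖x‖_A = ‖T S x‖_A ≤ d ‖S x‖_A` for `‖x‖_A = 1`,
which keeps `0` out of `σ_{A,app}(S)`, and for `λ ≠ 0` the identity
`R (T x - λ⁻¹ x) = -λ⁻¹ R T (S x - λ x)` gives `‖T x - λ⁻¹ x‖_A ≤ (d / |λ|) ‖S x - λ x‖_A`.
The reverse inclusion is the same argument with `T` and `S` exchanged. -/

section

variable {A T S : H →L[ℂ] H}

lemma anorm_eq_norm_sqrt (hA : A.IsPositive) (x : H) : anorm A x = ‖CFC.sqrt A x‖ := by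
  have hA' : 0 ≤ A := (nonneg_iff_isPositive A).mpr hA
  have hsa : IsSelfAdjoint (CFC.sqrt A) := .of_nonneg (CFC.sqrt_nonneg A)
  have h : (inner ℂ (A x) x : ℂ) = inner ℂ (CFC.sqrt A x) (CFC.sqrt A x) := by
    conv_lhs => rw [← CFC.sqrt_mul_sqrt_self A hA']
    exact hsa.isSymmetric (CFC.sqrt A x) x
  rw [anorm, h, ← RCLike.re_to_complex, inner_self_eq_norm_sq, Real.sqrt_sq (norm_nonneg _)]

lemma sqrt_apply_eq_of_apply_eq (hA : A.IsPositive) {x y : H} (h : A x = A y) :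
    CFC.sqrt A x = CFC.sqrt A y := by
  have h0 : anorm A (x - y) = 0 := by simp [anorm, h]
  rw [anorm_eq_norm_sqrt hA, norm_eq_zero, map_sub, sub_eq_zero] at h0
  exact h0

lemma sqrt_apply_comp_apply (hA : A.IsPositive) (h : A ∘L T ∘L S = A) (x : H) :
    CFC.sqrt A (T (S x)) = CFC.sqrt A x :=
  sqrt_apply_eq_of_apply_eq hA (congrArg (· x) h)

variable {d : ℝ}

lemma anorm_le_mul_anorm_apply (hA : A.IsPositive) (hT : ∀ ξ, anorm A (T ξ) ≤ d * anorm A ξ)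
    (h : A ∘L T ∘L S = A) (x : H) : anorm A x ≤ d * anorm A (S x) := by
  calc anorm A x = anorm A (T (S x)) := by
        rw [anorm_eq_norm_sqrt hA, anorm_eq_norm_sqrt hA, sqrt_apply_comp_apply hA h]
    _ ≤ d * anorm A (S x) := hT _

lemma anorm_sub_inv_smul_le (hA : A.IsPositive) (hT : ∀ ξ, anorm A (T ξ) ≤ d * anorm A ξ)
    (h : A ∘L T ∘L S = A) {lam : ℂ} (hlam : lam ≠ 0) (x : H) :
    anorm A (T x - lam⁻¹ • x) ≤ d / ‖lam‖ * anorm A (S x - lam • x) := by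
  set R := CFC.sqrt A
  have hR : R (T x - lam⁻¹ • x) = -lam⁻¹ • R (T (S x - lam • x)) := by
    rw [map_sub, map_smul, map_sub, map_sub, map_smul, map_smul, sqrt_apply_comp_apply hA h,
      smul_sub, smul_smul, neg_mul, inv_mul_cancel₀ hlam]
    module
  calc anorm A (T x - lam⁻¹ • x) = ‖lam‖⁻¹ * anorm A (T (S x - lam • x)) := by
        rw [anorm_eq_norm_sqrt hA, anorm_eq_norm_sqrt hA, hR, norm_smul, norm_neg, norm_inv]
    _ ≤ ‖lam‖⁻¹ * (d * anorm A (S x - lam • x)) := by gcongr; exact hT _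
    _ = d / ‖lam‖ * anorm A (S x - lam • x) := by ring

lemma zero_notMem_sigmaAapp (hA : A.IsPositive) (hT : MemBAhalf A T) (h : A ∘L T ∘L S = A) :
    (0 : ℂ) ∉ sigmaAapp A S := by
  rintro ⟨x, hx1, hx⟩
  obtain ⟨d, -, hTd⟩ := hT
  simp only [zero_smul, sub_zero] at hx
  have hle : ∀ n, (1 : ℝ) ≤ d * anorm A (S (x n)) := fun n =>
    hx1 n ▸ anorm_le_mul_anorm_apply hA hTd h (x n)
  have hlim : Tendsto (fun n => d * anorm A (S (x n))) atTop (𝓝 0) := by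
    simpa using hx.const_mul d
  linarith [ge_of_tendsto' hlim hle]

lemma inv_mem_sigmaAapp (hA : A.IsPositive) (hT : MemBAhalf A T) (h : A ∘L T ∘L S = A)
    {lam : ℂ} (hlam : lam ∈ sigmaAapp A S) : lam⁻¹ ∈ sigmaAapp A T := by
  have hlam0 : lam ≠ 0 := by
    rintro rfl
    exact zero_notMem_sigmaAapp hA hT h hlam
  obtain ⟨x, hx1, hx⟩ := hlam
  obtain ⟨d, -, hTd⟩ := hT
  refine ⟨x, hx1, squeeze_zero (fun n => Real.sqrt_nonneg _)
    (fun n => anorm_sub_inv_smul_le hA hTd h hlam0 (x n)) ?_⟩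
  simpa using hx.const_mul (d / ‖lam‖)

end

theorem stmt6_general (A T S : H →L[ℂ] H) (hA : A.IsPositive)
    (hT : MemBAhalf A T) (hS : MemBAhalf A S)
    (h1 : A ∘L T ∘L S = A) (h2 : A ∘L S ∘L T = A) :
    sigmaAapp A S = {lam : ℂ | 1 / lam ∈ sigmaAapp A T} := by
  ext lam
  rw [Set.mem_ofPred_eq, one_div]
  constructor
  · exact inv_mem_sigmaAapp hA hT h1
  · intro hlam
    simpa using inv_mem_sigmaAapp hA hS h2 hlam

/-- if `T ∈ B_{A^{1/2}}(H)` is `A`-invertible with `A`-inverse `S`, then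
`σ_{A,app}(S) = {λ : 1/λ ∈ σ_{A,app}(T)}`. -/
theorem stmt6 (A T S : H →L[ℂ] H) (hA : A.IsPositive) (hA0 : A ≠ 0)
    (hT : MemBAhalf A T) (hS : MemBAhalf A S) (hS0 : S ≠ 0)
    (h1 : A ∘L T ∘L S = A) (h2 : A ∘L S ∘L T = A) :
    sigmaAapp A S = {lam : ℂ | 1 / lam ∈ sigmaAapp A T} :=
  stmt6_general A T S hA hT hS h1 h2
end

section
/- Let T ∈ B_{A^{1/2}}(H). Then the topological boundary of σ_A(T) is contained in σ_{A,app}(T) ∪ {conj(λ) : λ ∈ σ_{A,app}(T^◇)}. -/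
open Filter Topology ContinuousLinearMap

variable {H : Type*} [NormedAddCommGroup H] [InnerProductSpace ℂ H] [CompleteSpace H]

/-! Write `A = R ∘ R` with `R = A^{1/2}` self-adjoint, so that `‖x‖_A = ‖R x‖`. A point `μ` outside
`σ_{A,app}(T) ∪ conj σ_{A,app}(T^◇)` comes with lower bounds `c ‖R x‖ ≤ ‖R (T - μ) x‖` and
`c ‖R x‖ ≤ ‖R (T^◇ - conj μ) x‖`; these persist on a neighbourhood of `μ`, so the union is closed.
For `D = μ - T`, the second bound makes `D*` bounded below on `(ker R)ᗮ`, the closure of the range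
of `R`, and the first makes the compression of `D` to `(ker R)ᗮ` injective. Hence that compression
is invertible, and its inverse, sandwiched between the projection and the inclusion, is an
`A`-inverse of `D`. So `σ_A(T)` lies in the closed union, and with it the boundary of `σ_A(T)`. -/

open scoped InnerProduct

namespace ContinuousLinearMap

variable {𝕜 E : Type*} [RCLike 𝕜] [NormedAddCommGroup E] [InnerProductSpace 𝕜 E]

section Kernel

variable {F : Type*} [NormedAddCommGroup F] [NormedSpace 𝕜 F]

lemma eq_zero_of_mem_orthogonal_ker {R : E →L[𝕜] F} {u : E} (hu : u ∈ R.kerᗮ) (hRu : R u = 0) :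
    u = 0 :=
  R.ker.orthogonal_disjoint.le_bot ⟨hRu, hu⟩

lemma apply_starProjection_orthogonal_ker [CompleteSpace E] (R : E →L[𝕜] F) (x : E) :
    R (R.kerᗮ.starProjection x) = R x := by
  have h : x - R.kerᗮ.starProjection x ∈ R.kerᗮᗮ := R.kerᗮ.sub_starProjection_mem_orthogonal x
  rw [Submodule.orthogonal_orthogonal, LinearMap.mem_ker, map_sub, sub_eq_zero] at h
  exact h.symm

end Kernel

section Compression

variable (K : Submodule 𝕜 E) [CompleteSpace K]

noncomputable def compression (D : E →L[𝕜] E) : K →L[𝕜] K :=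
  K.orthogonalProjectionOnto ∘L D ∘L K.subtypeL

lemma adjoint_compression [CompleteSpace E] (D : E →L[𝕜] E) :
    (compression K D)† = compression K (D†) := by
  simp only [compression, adjoint_comp, Submodule.adjoint_subtypeL,
    Submodule.adjoint_orthogonalProjectionOnto, comp_assoc]

variable {K} in
lemma orthogonalProjectionOnto_apply_eq_compression {D : E →L[𝕜] E}
    (hD : Kᗮ ∈ Module.End.invtSubmodule (D : E →ₗ[𝕜] E)) (x : E) :
    K.orthogonalProjectionOnto (D x) = compression K D (K.orthogonalProjectionOnto x) := by
  have hx : x - K.starProjection x ∈ Kᗮ := K.sub_starProjection_mem_orthogonal x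
  have h := K.orthogonalProjectionOnto_eq_zero_iff.mpr (hD hx)
  simpa [compression, map_sub, sub_eq_zero] using h

end Compression

section BoundedBelow

variable [CompleteSpace E] {R D D' : E →L[𝕜] E}

lemma ker_mem_invtSubmodule_of_comp_eq_adjoint_comp (hR : IsSelfAdjoint R)
    (hRD' : R ∘L D' = D† ∘L R) : R.ker ∈ Module.End.invtSubmodule (D : E →ₗ[𝕜] E) := by
  have hRD : R ∘L D = D'† ∘L R := by
    simpa [adjoint_comp, hR.adjoint_eq] using congrArg adjoint hRD'.symm
  intro p (hp : R p = 0)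
  show R (D p) = 0
  simpa [hp] using congrArg (· p) hRD

lemma le_norm_adjoint_apply_of_mem_orthogonal_ker (hR : IsSelfAdjoint R)
    (hRD' : R ∘L D' = D† ∘L R) {c : ℝ} (hD' : ∀ x, c * ‖R x‖ ≤ ‖R (D' x)‖) {u : E}
    (hu : u ∈ R.kerᗮ) : c * ‖u‖ ≤ ‖(D†) u‖ := by
  rw [orthogonal_ker, hR.adjoint_eq, ← SetLike.mem_coe, Submodule.topologicalClosure_coe] at hu
  refine closure_minimal (t := {u | c * ‖u‖ ≤ ‖(D†) u‖}) ?_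
    (isClosed_le (by fun_prop) (by fun_prop)) hu
  rintro _ ⟨x, rfl⟩
  simpa [← comp_apply, ← hRD'] using hD' x

lemma ker_compression_orthogonal_ker_eq_bot {c : ℝ} (hc : 0 < c)
    (hD : ∀ x, c * ‖R x‖ ≤ ‖R (D x)‖) : (compression R.kerᗮ D).ker = ⊥ := by
  refine (Submodule.eq_bot_iff _).mpr fun k hk => ?_
  have hDk : D k ∈ R.kerᗮᗮ := Submodule.orthogonalProjectionOnto_eq_zero_iff.mp hk
  rw [Submodule.orthogonal_orthogonal] at hDk
  have hRk : R k = 0 := by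
    have h := hD k
    rw [show R (D k) = 0 from hDk, norm_zero] at h
    exact norm_le_zero_iff.mp (nonpos_of_mul_nonpos_right h hc)
  exact Subtype.ext (eq_zero_of_mem_orthogonal_ker k.2 hRk)

lemma isUnit_compression_orthogonal_ker (hR : IsSelfAdjoint R) (hRD' : R ∘L D' = D† ∘L R)
    {c : ℝ} (hc : 0 < c) (hD : ∀ x, c * ‖R x‖ ≤ ‖R (D x)‖)
    (hD' : ∀ x, c * ‖R x‖ ≤ ‖R (D' x)‖) : IsUnit (compression R.kerᗮ D) := by
  suffices IsUnit (compression R.kerᗮ (D†)) by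
    rw [← adjoint_compression, ← star_eq_adjoint] at this
    exact isUnit_star.mp this
  have hinv : R.kerᗮ ∈ Module.End.invtSubmodule ((D†) : E →ₗ[𝕜] E) :=
    orthogonal_mem_invtSubmodule <| by
      simpa using ker_mem_invtSubmodule_of_comp_eq_adjoint_comp hR hRD'
  rw [isUnit_iff_bijective, bijective_iff_dense_range_and_antilipschitz]
  constructor
  · rw [Submodule.topologicalClosure_eq_top_iff, orthogonal_range, ← adjoint_compression,
      adjoint_adjoint]
    exact ker_compression_orthogonal_ker_eq_bot hc hD
  · refine ⟨c.toNNReal⁻¹, (compression R.kerᗮ (D†)).antilipschitz_of_bound fun k => ?_⟩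
    have hDk : (D†) k ∈ R.kerᗮ := hinv k.2
    have hk : ‖compression R.kerᗮ (D†) k‖ = ‖(D†) k‖ := by
      rw [← Submodule.norm_coe, compression, comp_apply, comp_apply, Submodule.subtypeL_apply,
        Submodule.coe_orthogonalProjectionOnto_apply, Submodule.starProjection_eq_self_iff.mpr hDk]
    rw [NNReal.coe_inv, Real.coe_toNNReal _ hc.le, hk, le_inv_mul_iff₀ hc]
    exact le_norm_adjoint_apply_of_mem_orthogonal_ker hR hRD' hD' k.2

lemma exists_comp_eq_of_isUnit_compression
    (hD : R.ker ∈ Module.End.invtSubmodule (D : E →ₗ[𝕜] E))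
    (hU : IsUnit (compression R.kerᗮ D)) :
    ∃ S : E →L[𝕜] E, R ∘L D ∘L S = R ∧ R ∘L S ∘L D = R := by
  set K := R.kerᗮ
  set P := K.orthogonalProjectionOnto
  set W : K →L[𝕜] K := ↑hU.unit⁻¹
  have hUW (k : K) : compression K D (W k) = k := congrArg (· k) hU.mul_val_inv
  have hWU (k : K) : W (compression K D k) = k := congrArg (· k) hU.val_inv_mul
  have hRP (x : E) : R (P x) = R x := R.apply_starProjection_orthogonal_ker x
  have hKperp : Kᗮ ∈ Module.End.invtSubmodule (D : E →ₗ[𝕜] E) := by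
    rwa [Submodule.orthogonal_orthogonal]
  refine ⟨K.subtypeL ∘L W ∘L P, ?_, ?_⟩ <;> ext x
  · calc R (D (W (P x))) = R (P (D (W (P x)))) := (hRP _).symm
      _ = R (compression K D (W (P x))) := rfl
      _ = R x := by rw [hUW, hRP]
  · calc R (W (P (D x))) = R (W (compression K D (P x))) := by
          rw [orthogonalProjectionOnto_apply_eq_compression hKperp]
      _ = R x := by rw [hWU, hRP]

lemma exists_comp_eq_of_bounded_below (hR : IsSelfAdjoint R) (hRD' : R ∘L D' = D† ∘L R)
    {c : ℝ} (hc : 0 < c) (hD : ∀ x, c * ‖R x‖ ≤ ‖R (D x)‖)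
    (hD' : ∀ x, c * ‖R x‖ ≤ ‖R (D' x)‖) :
    ∃ S : E →L[𝕜] E, R ∘L D ∘L S = R ∧ R ∘L S ∘L D = R :=
  exists_comp_eq_of_isUnit_compression (ker_mem_invtSubmodule_of_comp_eq_adjoint_comp hR hRD')
    (isUnit_compression_orthogonal_ker hR hRD' hc hD hD')

end BoundedBelow

end ContinuousLinearMap

lemma anorm_eq_norm {A R : H →L[ℂ] H} (hR : IsSelfAdjoint R) (hRA : R ∘L R = A) (x : H) :
    anorm A x = ‖R x‖ := by
  have h : inner ℂ (A x) x = inner ℂ (R x) (R x) := by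
    simpa [← hRA, hR.adjoint_eq] using R.adjoint_inner_left x (R x)
  rw [anorm, h]
  exact (norm_eq_sqrt_re_inner (𝕜 := ℂ) (R x)).symm

section ApproximatePointSpectrum

variable {F : Type*} [NormedAddCommGroup F] [NormedSpace ℂ F] {A T : H →L[ℂ] H} {R : H →L[ℂ] F}

omit [CompleteSpace H] in
lemma notMem_sigmaAapp_iff (hAR : ∀ x, anorm A x = ‖R x‖) {μ : ℂ} :
    μ ∉ sigmaAapp A T ↔ ∃ c > 0, ∀ x, c * ‖R x‖ ≤ ‖R (T x - μ • x)‖ := by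
  refine ⟨fun hμ => ?_, ?_⟩
  · by_contra! hsmall
    choose x hx using fun n : ℕ => hsmall (1 / (n + 1)) Nat.one_div_pos_of_nat
    have hRx (n : ℕ) : 0 < ‖R (x n)‖ := by
      by_contra! h
      have := (hx n).trans_le (mul_nonpos_of_nonneg_of_nonpos (by positivity) h)
      exact (norm_nonneg _).not_gt this
    refine hμ ⟨fun n => (‖R (x n)‖⁻¹ : ℂ) • x n, fun n => ?_, ?_⟩
    · rw [hAR, map_smul, norm_smul]
      simp [(hRx n).ne']
    · refine squeeze_zero (fun n => (hAR _).symm ▸ norm_nonneg _) (fun n => ?_)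
        tendsto_one_div_add_atTop_nhds_zero_nat
      rw [hAR, map_smul, smul_comm μ, ← smul_sub, map_smul, norm_smul, norm_inv,
        Complex.norm_real, norm_norm, inv_mul_le_iff₀ (hRx n)]
      exact (hx n).le.trans_eq (mul_comm _ _)
  · rintro ⟨c, hc, hlow⟩ ⟨x, hx1, hlim⟩
    refine hc.not_ge (ge_of_tendsto' hlim fun n => ?_)
    have h := hlow (x n)
    rwa [← hAR, hx1, mul_one, ← hAR] at h

omit [CompleteSpace H] in
lemma isClosed_sigmaAapp (hAR : ∀ x, anorm A x = ‖R x‖) : IsClosed (sigmaAapp A T) := by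
  rw [← isOpen_compl_iff, Metric.isOpen_iff]
  intro μ hμ
  obtain ⟨c, hc, hlow⟩ := (notMem_sigmaAapp_iff hAR).mp hμ
  refine ⟨c / 2, half_pos hc, fun ν hν => (notMem_sigmaAapp_iff hAR).mpr
    ⟨c / 2, half_pos hc, fun x => ?_⟩⟩
  have hνμ : ‖ν - μ‖ < c / 2 := by simpa [dist_eq_norm] using hν
  have htri : ‖R (T x - μ • x)‖ ≤ ‖R (T x - ν • x)‖ + ‖ν - μ‖ * ‖R x‖ := by
    rw [← norm_smul, ← map_smul]
    refine (norm_add_le _ _).trans_eq' ?_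
    rw [← map_add, sub_smul, sub_add_sub_cancel]
  nlinarith [hlow x, norm_nonneg (R x)]

end ApproximatePointSpectrum

lemma aInvertibleHalf_of_bounded_below {A R D D' : H →L[ℂ] H} (hR : IsSelfAdjoint R)
    (hRA : R ∘L R = A) (hA0 : A ≠ 0) (hRD' : R ∘L D' = D† ∘L R) {c : ℝ} (hc : 0 < c)
    (hD : ∀ x, c * ‖R x‖ ≤ ‖R (D x)‖) (hD' : ∀ x, c * ‖R x‖ ≤ ‖R (D' x)‖) :
    AInvertibleHalf A D := by
  obtain ⟨S, hDS, hSD⟩ := exists_comp_eq_of_bounded_below hR hRD' hc hD hD'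
  refine ⟨S, ?_, ⟨c⁻¹, inv_pos.mpr hc, fun x => ?_⟩, ?_, ?_⟩
  · rintro rfl
    apply hA0
    rw [← hRA, ← hDS, comp_zero, comp_zero, zero_comp]
  · rw [anorm_eq_norm hR hRA, anorm_eq_norm hR hRA, le_inv_mul_iff₀ hc]
    simpa [← comp_apply, ← comp_assoc, hDS] using hD (S x)
  · rw [← hRA, comp_assoc, hDS]
  · rw [← hRA, comp_assoc, hSD]

lemma sigmaA_subset_sigmaAapp_union {A T R Tdia : H →L[ℂ] H} (hR : IsSelfAdjoint R)
    (hRA : R ∘L R = A) (hA0 : A ≠ 0) (hdia : R ∘L Tdia = T† ∘L R) :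
    sigmaA A T ⊆ sigmaAapp A T ∪ starRingEnd ℂ '' sigmaAapp A Tdia := by
  intro μ hμ
  by_contra hμ'
  rw [Set.mem_union, not_or] at hμ'
  have hAR := anorm_eq_norm hR hRA
  obtain ⟨c₁, hc₁, hT⟩ := (notMem_sigmaAapp_iff (T := T) hAR).mp hμ'.1
  obtain ⟨c₂, hc₂, hTdia⟩ := (notMem_sigmaAapp_iff (T := Tdia) (μ := starRingEnd ℂ μ) hAR).mp
    fun h => hμ'.2 ⟨_, h, Complex.conj_conj μ⟩
  refine hμ (aInvertibleHalf_of_bounded_below (D' := starRingEnd ℂ μ • 1 - Tdia) hR hRA hA0 ?_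
    (lt_min hc₁ hc₂) (fun x => ?_) (fun x => ?_))
  · have hadj : (μ • (1 : H →L[ℂ] H) - T)† = starRingEnd ℂ μ • 1 - T† := by
      rw [map_sub, map_smulₛₗ, adjoint_one]
    rw [hadj, sub_comp, comp_sub, hdia]
    ext x
    simp
  · rw [sub_apply, map_sub, norm_sub_rev]
    exact (mul_le_mul_of_nonneg_right (min_le_left _ _) (norm_nonneg _)).trans (by simpa using hT x)
  · rw [sub_apply, map_sub, norm_sub_rev]
    exact (mul_le_mul_of_nonneg_right (min_le_right _ _) (norm_nonneg _)).trans
      (by simpa using hTdia x)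

theorem stmt12_general (A T sqrtA Tdia : H →L[ℂ] H) (hA0 : A ≠ 0)
    (hsqpos : sqrtA.IsPositive) (hsq : sqrtA ∘L sqrtA = A)
    (hdia : sqrtA ∘L Tdia = (ContinuousLinearMap.adjoint T) ∘L sqrtA) :
    frontier (sigmaA A T) ⊆
      sigmaAapp A T ∪ (fun z : ℂ => starRingEnd ℂ z) '' sigmaAapp A Tdia := by
  have hR := hsqpos.isSelfAdjoint
  have hAR := anorm_eq_norm hR hsq
  have hclosed : IsClosed (sigmaAapp A T ∪ starRingEnd ℂ '' sigmaAapp A Tdia) :=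
    (isClosed_sigmaAapp hAR).union
      (Complex.conjCLE.toHomeomorph.isClosedMap _ (isClosed_sigmaAapp hAR))
  exact frontier_subset_closure.trans
    (closure_minimal (sigmaA_subset_sigmaAapp_union hR hsq hA0 hdia) hclosed)

/-- `∂σ_A(T) ⊆ σ_{A,app}(T) ∪ (σ_{A,app}(T^◇))^*`. -/
theorem stmt12 (A T sqrtA Tdia : H →L[ℂ] H) (hA : A.IsPositive) (hA0 : A ≠ 0)
    (hsqpos : sqrtA.IsPositive) (hsq : sqrtA ∘L sqrtA = A)
    (hT : MemBAhalf A T)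
    (hdia : sqrtA ∘L Tdia = (ContinuousLinearMap.adjoint T) ∘L sqrtA)
    (hrange : Set.range Tdia ⊆ closure (Set.range sqrtA)) :
    frontier (sigmaA A T) ⊆
      sigmaAapp A T ∪ (fun z : ℂ => starRingEnd ℂ z) '' sigmaAapp A Tdia :=
  stmt12_general A T sqrtA Tdia hA0 hsqpos hsq hdia
end
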